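/- Suppose variables are eliminated from a base network G using an elimination order π and from its twin network G^t using the twin elimination order π^t. Then for every variable X of G, the clusters satisfy C^t(X) ⊆ C(X) ∪ C(X)' and, when X is internal, C^t(X') ⊆ C(X) ∪ C(X)'. -/

import Mathlib

namespace Counterfactual

attribute [local instance] Classical.propDecidable

noncomputable section

universe u v

variable {V : Type u}

variable {V : Type u}

/-- The directed graph given by edge relation `E` (`E p c` means `p` is a parent of `c`)
is acyclic, i.e. it is a DAG. -/
def IsAcyclicRel (E : V → V → Prop) : Prop := ∀ x, ¬ Relation.TransGen E x x

/-- `x` is a root of the DAG `E`: it has no parents.  Non-roots are called internal. -/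
def isRoot (E : V → V → Prop) (x : V) : Prop := ∀ p, ¬ E p x

/-- The family of variable `X` in the DAG `E`: `X` together with its parents. -/
def famOf (E : V → V → Prop) (X : V) : Set V := insert X {p | E p X}

/-- The moral graph of the DAG `E`: connect every pair of nodes having a common child,
then drop directions. -/
def moralGraph (E : V → V → Prop) : SimpleGraph V where
  Adj u w := u ≠ w ∧ (E u w ∨ E w u ∨ ∃ c, E u c ∧ E w c)
  symm := by
    constructor
    intro u w h
    obtain ⟨h1, h2⟩ := h
    refine ⟨Ne.symm h1, ?_⟩
    rcases h2 with h | h | ⟨c, hc1, hc2⟩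
    · exact Or.inr (Or.inl h)
    · exact Or.inl h
    · exact Or.inr (Or.inr ⟨c, hc2, hc1⟩)
  loopless := by
    constructor
    intro u h
    exact h.1 rfl

/-- Eliminating vertex `x` from an undirected graph: pairwise connect the neighbors
of `x`, then remove (isolate) `x`. -/
def eliminate (G : SimpleGraph V) (x : V) : SimpleGraph V where
  Adj u w := u ≠ w ∧ u ≠ x ∧ w ≠ x ∧ (G.Adj u w ∨ (G.Adj u x ∧ G.Adj x w))
  symm := by
    constructor
    intro u w h
    obtain ⟨h1, h2, h3, h4⟩ := h
    refine ⟨Ne.symm h1, h3, h2, ?_⟩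
    rcases h4 with h | ⟨ha, hb⟩
    · exact Or.inl h.symm
    · exact Or.inr ⟨hb.symm, ha.symm⟩
  loopless := by
    constructor
    intro u h
    exact h.1 rfl

/-- Eliminate a list of vertices, in order. -/
def elimList (G : SimpleGraph V) : List V → SimpleGraph V
  | [] => G
  | x :: xs => elimList (eliminate G x) xs

/-- The graph obtained from `G` after eliminating the first `i` variables of `π`. -/
def graphAt (G : SimpleGraph V) (π : List V) (i : ℕ) : SimpleGraph V :=
  elimList G (π.take i)

/-- `x` together with its neighbors in the undirected graph `G`. -/
def closedNbhd (G : SimpleGraph V) (x : V) : Set V := insert x {y | G.Adj x y}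

/-- An elimination order: a total ordering of all the variables. -/
def IsElimOrder (π : List V) : Prop := π.Nodup ∧ ∀ x : V, x ∈ π

/-- The cluster of variable `X` in the elimination process on the moral graph of `E`
induced by `π`: `X` together with its neighbors in the graph just before `X` is eliminated. -/
def clusterOf (E : V → V → Prop) (π : List V) (X : V) : Set V :=
  closedNbhd (graphAt (moralGraph E) π (π.idxOf X)) X

/-- The width of an elimination order: the size of its largest cluster minus one. -/
def orderWidth (E : V → V → Prop) (π : List V) : ℕ :=
  sSup {n : ℕ | ∃ X ∈ π, n = (clusterOf E π X).ncard} - 1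

/-- The treewidth of the DAG `E`: the minimum width attained by an elimination order. -/
def treewidthOf (E : V → V → Prop) : ℕ :=
  sInf {w : ℕ | ∃ π : List V, IsElimOrder π ∧ orderWidth E π = w}

/-! ### Twin networks -/

/-- The variables of the twin network of `E`: the base variables (`Sum.inl`) together
with a duplicate (`Sum.inr`) for every internal (non-root) variable. -/
abbrev TwinVar (E : V → V → Prop) : Type u := V ⊕ {x : V // ¬ isRoot E x}

/-- The duplicate `X'` of a variable `X`; by convention `X' = X` when `X` is a root. -/
def twinDup (E : V → V → Prop) (x : V) : TwinVar E :=
  if h : isRoot E x then Sum.inl x else Sum.inr ⟨x, h⟩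

/-- The edges of the twin network `G^t` of the base network `E`. -/
def twinEdge (E : V → V → Prop) (a b : TwinVar E) : Prop :=
  match a, b with
  | Sum.inl p, Sum.inl x => E p x
  | Sum.inl p, Sum.inr x => isRoot E p ∧ E p x.1
  | Sum.inr p, Sum.inr x => E p.1 x.1
  | Sum.inr _, Sum.inl _ => False

/-- The twin elimination order: replace each non-root variable `X` of `π`
by the two consecutive variables `X, X'`. -/
def twinOrder (E : V → V → Prop) (π : List V) : List (TwinVar E) :=
  π.foldr (fun x acc =>
    (if h : isRoot E x then [Sum.inl x] else [Sum.inl x, Sum.inr ⟨x, h⟩]) ++ acc) []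

/-- Eliminate the pair `{X, X'}` (a single variable when `X` is a root) from a graph
on the twin variables. -/
def elimTwinPair (E : V → V → Prop) (G : SimpleGraph (TwinVar E)) (x : V) :
    SimpleGraph (TwinVar E) :=
  if h : isRoot E x then eliminate G (Sum.inl x)
  else eliminate (eliminate G (Sum.inl x)) (Sum.inr ⟨x, h⟩)

/-- The twin graph sequence: `twinGraphAt E π i` is the graph obtained from the moral graph
of the twin network after eliminating the pairs `{π 0, (π 0)'}, …` for the first `i`
variables of `π`. -/
def twinGraphAt (E : V → V → Prop) (π : List V) (i : ℕ) : SimpleGraph (TwinVar E) :=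
  (π.take i).foldl (elimTwinPair E) (moralGraph (twinEdge E))

/-- The cluster of twin variable `Y` in the elimination process on the moral graph of the
twin network induced by the twin elimination order. -/
def twinClusterOf (E : V → V → Prop) (π : List V) (Y : TwinVar E) : Set (TwinVar E) :=
  clusterOf (twinEdge E) (twinOrder E π) Y

/-! ### Jointrees -/

/-- A leaf of a tree: a node with exactly one neighbor. -/
def IsLeaf {J : Type v} (T : SimpleGraph J) (j : J) : Prop := ∃! k, T.Adj j k

/-- A jointree for the DAG `E`: a tree `T` together with a host function `H` mapping
(the index `X` of) each family of `E` to a nonempty set of hosting nodes; only leaves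
may be hosts and each leaf hosts exactly one family. -/
structure Jointree (E : V → V → Prop) (J : Type v) where
  T : SimpleGraph J
  isTree : T.IsTree
  H : V → Set J
  hosts_nonempty : ∀ X : V, (H X).Nonempty
  hosts_leaf : ∀ (X : V) (j : J), j ∈ H X → IsLeaf T j
  leaf_host : ∀ j : J, IsLeaf T j → ∃! X : V, j ∈ H X

variable {E : V → V → Prop} {J : Type v}

/-- The variables appearing (in a family hosted by a leaf) on the `i`-side of the
tree edge `(i, j)`. -/
def sideVars (jt : Jointree E J) (i j : J) : Set V :=
  {X | ∃ (Y : V) (l : J), l ∈ jt.H Y ∧ X ∈ famOf E Y ∧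
    (jt.T.deleteEdges {s(i, j)}).Reachable i l}

/-- The separator of the tree edge `(i, j)`: the variables hosted on both sides. -/
def sepOf (jt : Jointree E J) (i j : J) : Set V :=
  sideVars jt i j ∩ sideVars jt j i

/-- The cluster of a jointree node: for a leaf, the family it hosts; for an internal
node, the union of the separators of its adjacent edges. -/
def clusterJT (jt : Jointree E J) (i : J) : Set V :=
  if IsLeaf jt.T i then ⋃ X ∈ {Y : V | i ∈ jt.H Y}, famOf E X
  else ⋃ j ∈ {j : J | jt.T.Adj i j}, sepOf jt i j

/-- The width of a jointree: the size of its largest cluster minus one. -/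
def widthJT (jt : Jointree E J) : ℕ := (⨆ i : J, (clusterJT jt i).ncard) - 1

/-- `l` is at or below `u` in the tree `T` rooted at `r`: `u` lies on every
(equivalently, on the unique) path from `r` to `l`. -/
def Below {J : Type v} (T : SimpleGraph J) (r u l : J) : Prop :=
  ∀ p : T.Walk r l, p.IsPath → u ∈ p.support

/-- Node `u` of the jointree is duplicated by Algorithm 1 (with root `r`): every leaf at
or below `u` hosts only families of internal variables. -/
def Duplicated (jt : Jointree E J) (r u : J) : Prop :=
  ∀ l : J, IsLeaf jt.T l → Below jt.T r u l → ∀ X : V, l ∈ jt.H X → ¬ isRoot E X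

/-- The nodes of the twin jointree produced by Algorithm 1: the original nodes
(`Sum.inl`) plus a duplicate (`Sum.inr`) of every duplicated node. -/
abbrev TwinJ (jt : Jointree E J) (r : J) := J ⊕ {u : J // Duplicated jt r u}

/-- Adjacency of the twin jointree produced by Algorithm 1: the original tree edges,
the duplicates of the duplicated edges, and the edges attaching the roots of the
duplicate subtrees to the parents of the corresponding duplicated subtree roots. -/
def twinTAdj (jt : Jointree E J) (r : J) : TwinJ jt r → TwinJ jt r → Prop
  | Sum.inl i, Sum.inl j => jt.T.Adj i j
  | Sum.inl i, Sum.inr v => jt.T.Adj i v.1 ∧ ¬ Duplicated jt r i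
  | Sum.inr u, Sum.inl j => jt.T.Adj u.1 j ∧ ¬ Duplicated jt r j
  | Sum.inr u, Sum.inr v => jt.T.Adj u.1 v.1

/-- The tree of the twin jointree produced by Algorithm 1. -/
def twinT (jt : Jointree E J) (r : J) : SimpleGraph (TwinJ jt r) where
  Adj := twinTAdj jt r
  symm := by
    constructor
    rintro (i | u) (j | v) h <;> simp only [twinTAdj] at h ⊢
    · exact jt.T.adj_symm h
    · exact ⟨jt.T.adj_symm h.1, h.2⟩
    · exact ⟨jt.T.adj_symm h.1, h.2⟩
    · exact jt.T.adj_symm h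
  loopless := by
    constructor
    rintro (i | u) h <;> simp only [twinTAdj] at h
    · exact jt.T.loopless.irrefl i h
    · exact jt.T.loopless.irrefl u.1 h

/-- The host function of the twin jointree produced by Algorithm 1: a base family is
hosted by the original hosts of the corresponding base family, and a duplicate family is
hosted by the duplicates of the hosts of the corresponding base family. -/
def twinH (jt : Jointree E J) (r : J) : TwinVar E → Set (TwinJ jt r) :=
  fun a =>
    match a with
    | Sum.inl X => Sum.inl '' jt.H X
    | Sum.inr x => {b | ∃ (l : J) (hl : Duplicated jt r l),
        l ∈ jt.H x.1 ∧ b = Sum.inr ⟨l, hl⟩}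

/-- The copy of jointree node `i` on the duplicate side: its duplicate if `i` is
duplicated, and `i` itself otherwise. -/
def dupJ (jt : Jointree E J) (r i : J) : TwinJ jt r :=
  if h : Duplicated jt r i then Sum.inr ⟨i, h⟩ else Sum.inl i

/-! ### Thinning -/

/-- Thinning rule 1 for removing the functional variable `X` from the separator of
edge `(i,j)`: the edge lies on a path between two leaves hosting the family of `X`,
and every separator on this path contains `X`. -/
def Rule1 (jt : Jointree E J) (S : J → J → Set V) (i j : J) (X : V) : Prop :=
  ∃ (l m : J) (p : jt.T.Walk l m), p.IsPath ∧ l ∈ jt.H X ∧ m ∈ jt.H X ∧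
    s(i, j) ∈ p.edges ∧ ∀ a b : J, s(a, b) ∈ p.edges → X ∈ S a b

/-- Thinning rule 2 for removing the variable `X` from the separator of edge `(i,j)`:
no other separator adjacent to `i` contains `X`, or no other separator adjacent to `j`
contains `X`. -/
def Rule2 (jt : Jointree E J) (S : J → J → Set V) (i j : J) (X : V) : Prop :=
  (∀ k : J, jt.T.Adj i k → k ≠ j → X ∉ S i k) ∨
  (∀ k : J, jt.T.Adj j k → k ≠ i → X ∉ S j k)

/-- One valid thinning step on a separator assignment: remove a functional
(here: internal, as in an SCM) variable `X` from the separator of an edge `(i,j)`,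
as licensed by one of the two thinning rules. -/
def ThinStep (jt : Jointree E J) (S S' : J → J → Set V) : Prop :=
  ∃ (i j : J) (X : V), jt.T.Adj i j ∧ ¬ isRoot E X ∧ X ∈ S i j ∧
    (Rule1 jt S i j X ∨ Rule2 jt S i j X) ∧
    S' = fun a b => if (a = i ∧ b = j) ∨ (a = j ∧ b = i) then S a b \ {X} else S a b

/-- `S` is the separator assignment of a thinned jointree obtained from `jt`:
it is reachable from the separators of `jt` by valid thinning steps, applied
to exhaustion. -/
def IsThinning (jt : Jointree E J) (S : J → J → Set V) : Prop :=
  Relation.ReflTransGen (ThinStep jt) (fun i j => sepOf jt i j) S ∧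
    ∀ S', ¬ ThinStep jt S S'

/-- The cluster of a node of a thinned jointree with separator assignment `S`. -/
def thClusterJT (jt : Jointree E J) (S : J → J → Set V) (i : J) : Set V :=
  if IsLeaf jt.T i then ⋃ X ∈ {Y : V | i ∈ jt.H Y}, famOf E X
  else ⋃ j ∈ {j : J | jt.T.Adj i j}, S i j

/-- The width of a thinned jointree with separator assignment `S`. -/
def thWidthJT (jt : Jointree E J) (S : J → J → Set V) : ℕ :=
  (⨆ i : J, (thClusterJT jt S i).ncard) - 1

/-- The causal treewidth of the DAG `E` whose internal variables are all functional:
the minimum width attained by a thinned jointree for `E`. -/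
def causalTreewidth (E : V → V → Prop) : ℕ :=
  sInf {w : ℕ | ∃ (J : Type u) (_ : Finite J) (jt : Jointree E J) (S : J → J → Set V),
    IsThinning jt S ∧ thWidthJT jt S = w}

/-- The thinned separator assignment for the twin jointree produced by Algorithm 1,
obtained from a thinned separator assignment `S` of the base jointree:
`S^t = S` on duplicated edges, `S^t = S'` on duplicate edges, and
`S^t = S ∪ S'` on invariant edges. -/
def twinSep (jt : Jointree E J) (r : J) (S : J → J → Set V) :
    TwinJ jt r → TwinJ jt r → Set (TwinVar E)
  | Sum.inl i, Sum.inl j =>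
      if Duplicated jt r i ∨ Duplicated jt r j then Sum.inl '' S i j
      else Sum.inl '' S i j ∪ twinDup E '' S i j
  | Sum.inl i, Sum.inr v => twinDup E '' S i v.1
  | Sum.inr u, Sum.inl j => twinDup E '' S u.1 j
  | Sum.inr u, Sum.inr v => twinDup E '' S u.1 v.1

/-! ### N-world networks -/

/-- The variables of the `N`-world network of a base network with variables `V`,
with respect to a set `R` of roots: the variables in `R` (`Sum.inl`) stay unreplicated,
and each variable outside `R` is replaced by `N` duplicates (`Sum.inr`). -/
abbrev NVar (R : Set V) (N : ℕ) : Type u := {x : V // x ∈ R} ⊕ ({x : V // x ∉ R} × Fin N)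

/-- The `k`-th duplicate `X^k` of variable `X`; by convention `X^k = X` when `X ∈ R`. -/
def ndup (R : Set V) (N : ℕ) (x : V) (k : Fin N) : NVar R N :=
  if h : x ∈ R then Sum.inl ⟨x, h⟩ else Sum.inr (⟨x, h⟩, k)

/-- The edges of the `N`-world network `G^N` of the base network `E` with respect to the
set of roots `R`: a parent `P ∈ R` of `X` is a parent of every duplicate `X^k`, while a
parent `P ∉ R` of `X` yields the edges `P^k → X^k`. -/
def nEdge (E : V → V → Prop) (R : Set V) (N : ℕ) (a b : NVar R N) : Prop :=
  match a, b with
  | Sum.inl p, Sum.inr x => E p.1 x.1.1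
  | Sum.inr p, Sum.inr x => E p.1.1 x.1.1 ∧ p.2 = x.2
  | _, _ => False

/-- Eliminate all `N` duplicates `x^1, …, x^N` of `x` (a single variable when `x ∈ R`). -/
def elimNBlock (R : Set V) (N : ℕ) (G : SimpleGraph (NVar R N)) (x : V) :
    SimpleGraph (NVar R N) :=
  if h : x ∈ R then eliminate G (Sum.inl ⟨x, h⟩)
  else (List.ofFn (fun k : Fin N => (Sum.inr (⟨x, h⟩, k) : NVar R N))).foldl eliminate G

/-- The `N`-world elimination order obtained from `π`: replace each variable `x ∉ R`
by its `N` duplicates `x^1, …, x^N`. -/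
def nOrder (R : Set V) (N : ℕ) (π : List V) : List (NVar R N) :=
  π.foldr (fun x acc =>
    (if h : x ∈ R then [(Sum.inl ⟨x, h⟩ : NVar R N)]
     else List.ofFn (fun k : Fin N => (Sum.inr (⟨x, h⟩, k) : NVar R N))) ++ acc) []

/-! ### Generalized N-world networks -/

/-- The variables of a generalized `N`-world network: nodes outside the duplicated set `D`
stay unreplicated, and each node in `D` is replaced by `N` duplicates. -/
abbrev GNVar (D : Set V) (N : ℕ) : Type u := {x : V // x ∉ D} ⊕ ({x : V // x ∈ D} × Fin N)

/-- The edges of a generalized `N`-world network of the base network `E` with respect to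
the duplicated set `D` and the optional extra edges `ex` between duplicates (an edge from
`X^i` to `X^j` is added when `i < j` and `ex X i j` holds). -/
def gnEdge (E : V → V → Prop) (D : Set V) (N : ℕ) (ex : V → Fin N → Fin N → Prop)
    (a b : GNVar D N) : Prop :=
  match a, b with
  | Sum.inl p, Sum.inl x => E p.1 x.1
  | Sum.inl p, Sum.inr x => E p.1 x.1.1
  | Sum.inr p, Sum.inr x =>
      (E p.1.1 x.1.1 ∧ p.2 = x.2) ∨ (p.1.1 = x.1.1 ∧ p.2 < x.2 ∧ ex x.1.1 p.2 x.2)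
  | Sum.inr _, Sum.inl _ => False


/-- The `N`-world graph sequence: the graph obtained from the moral graph of the
`N`-world network after eliminating all duplicates of the first `i` variables of `π`. -/
def nGraphAt (E : V → V → Prop) (R : Set V) (N : ℕ) (π : List V) (i : ℕ) :
    SimpleGraph (NVar R N) :=
  (π.take i).foldl (elimNBlock R N) (moralGraph (nEdge E R N))

/-- The cluster of an `N`-world variable `Y` in the elimination process on the moral
graph of the `N`-world network induced by the `N`-world elimination order. -/
def nClusterOf (E : V → V → Prop) (R : Set V) (N : ℕ) (π : List V) (Y : NVar R N) :
    Set (NVar R N) :=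
  clusterOf (nEdge E R N) (nOrder R N π) Y

end


section TwinAux

variable {V : Type u} {E : V → V → Prop}

/-- Projection of a twin variable to its base variable. -/
def tproj (E : V → V → Prop) : TwinVar E → V := Sum.elim id Subtype.val

@[simp] lemma tproj_inl (x : V) : tproj E (Sum.inl x) = x := rfl
@[simp] lemma tproj_inr (x : {x : V // ¬ isRoot E x}) : tproj E (Sum.inr x) = x.1 := rfl

/-- The block of a base variable in the twin order. -/
noncomputable def blk (E : V → V → Prop) (x : V) : List (TwinVar E) :=
  if h : isRoot E x then [Sum.inl x] else [Sum.inl x, Sum.inr ⟨x, h⟩]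

lemma twinOrder_cons (x : V) (l : List V) :
    twinOrder E (x :: l) = blk E x ++ twinOrder E l := rfl

lemma twinOrder_append (l1 l2 : List V) :
    twinOrder E (l1 ++ l2) = twinOrder E l1 ++ twinOrder E l2 := by
  induction l1 with
  | nil => rfl
  | cons x l ih => rw [List.cons_append, twinOrder_cons, twinOrder_cons, ih, List.append_assoc]

lemma inl_not_mem_twinOrder {X : V} : ∀ {l : List V}, X ∉ l →
    (Sum.inl X : TwinVar E) ∉ twinOrder E l := by
  intro l
  induction l with
  | nil => intro _ h; exact absurd h List.not_mem_nil
  | cons x l ih =>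
    intro hX h
    rw [twinOrder_cons, List.mem_append] at h
    rcases h with h | h
    · unfold blk at h
      split_ifs at h <;> simp_all <;> exact hX (by simp [h])
    · exact ih (fun hm => hX (List.mem_cons_of_mem _ hm)) h

lemma inr_not_mem_twinOrder {X : V} {hX : ¬ isRoot E X} : ∀ {l : List V}, X ∉ l →
    (Sum.inr ⟨X, hX⟩ : TwinVar E) ∉ twinOrder E l := by
  intro l
  induction l with
  | nil => intro _ h; exact absurd h List.not_mem_nil
  | cons x l ih =>
    intro hXl h
    rw [twinOrder_cons, List.mem_append] at h
    rcases h with h | h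
    · unfold blk at h
      split_ifs at h <;> simp_all
    · exact ih (fun hm => hXl (List.mem_cons_of_mem _ hm)) h

lemma elimList_append {W : Type v} (G : SimpleGraph W) :
    ∀ (l1 l2 : List W), elimList G (l1 ++ l2) = elimList (elimList G l1) l2 := by
  intro l1
  induction l1 generalizing G with
  | nil => intro l2; rfl
  | cons x l ih => intro l2; exact ih (eliminate G x) l2

lemma elimList_blk (G : SimpleGraph (TwinVar E)) (x : V) :
    elimList G (blk E x) = elimTwinPair E G x := by
  unfold blk elimTwinPair
  split_ifs <;> rfl

lemma elimList_twinOrder : ∀ (l : List V) (G : SimpleGraph (TwinVar E)),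
    elimList G (twinOrder E l) = l.foldl (elimTwinPair E) G := by
  intro l
  induction l with
  | nil => intro G; rfl
  | cons x l ih =>
    intro G
    rw [twinOrder_cons, elimList_append, elimList_blk, List.foldl_cons, ih]

noncomputable instance sumLawfulBEq {α : Type u} {β : Type v} [BEq α] [BEq β]
    [LawfulBEq α] [LawfulBEq β] : LawfulBEq (α ⊕ β) where
  eq_of_beq := by
    rintro (a|a) (b|b) h
    · rw [show ((Sum.inl a : α ⊕ β) == Sum.inl b) = (a == b) from rfl] at h
      rw [eq_of_beq h]
    · exact absurd h (by rw [show ((Sum.inl a : α ⊕ β) == Sum.inr b) = false from rfl]; simp)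
    · exact absurd h (by rw [show ((Sum.inr a : α ⊕ β) == Sum.inl b) = false from rfl]; simp)
    · rw [show ((Sum.inr a : α ⊕ β) == Sum.inr b) = (a == b) from rfl] at h
      rw [eq_of_beq h]
  rfl := by
    rintro (a|a)
    · rw [show ((Sum.inl a : α ⊕ β) == Sum.inl a) = (a == a) from rfl]; simp
    · rw [show ((Sum.inr a : α ⊕ β) == Sum.inr a) = (a == a) from rfl]; simp

lemma indexOf_append_cons {α : Type v} [BEq α] [LawfulBEq α] :
    ∀ (l1 : List α) (a : α) (l2 : List α), a ∉ l1 →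
      (l1 ++ a :: l2).idxOf a = l1.length := by
  intro l1
  induction l1 with
  | nil => intro a l2 _; simp [List.idxOf_cons]
  | cons b l ih =>
    intro a l2 h
    have hba : (b == a) = false := by
      simp only [beq_eq_false_iff_ne, ne_eq]
      intro hb; exact h (by simp [hb])
    rw [List.cons_append, List.idxOf_cons, hba]
    simp only [cond_false, List.length_cons]
    rw [ih a l2 (fun hm => h (List.mem_cons_of_mem _ hm))]

/-- The key invariant: twin-graph adjacency projects to base-graph adjacency. -/
def Inv (E : V → V → Prop) (G : SimpleGraph (TwinVar E)) (H : SimpleGraph V) : Prop :=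
  ∀ a b, G.Adj a b → tproj E a = tproj E b ∨ H.Adj (tproj E a) (tproj E b)

/-- The mid-elimination invariant, allowing fill-in edges through `x`. -/
def InvM (E : V → V → Prop) (G : SimpleGraph (TwinVar E)) (H : SimpleGraph V) (x : V) : Prop :=
  ∀ a b, G.Adj a b → tproj E a = tproj E b ∨ H.Adj (tproj E a) (tproj E b) ∨
    (H.Adj (tproj E a) x ∧ H.Adj x (tproj E b))

lemma inv_invM {G : SimpleGraph (TwinVar E)} {H : SimpleGraph V} {x : V}
    (h : Inv E G H) : InvM E G H x :=
  fun a b hab => (h a b hab).imp id Or.inl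

lemma invM_elim {G : SimpleGraph (TwinVar E)} {H : SimpleGraph V} {x : V}
    (y : TwinVar E) (hy : tproj E y = x) (h : InvM E G H x) :
    InvM E (eliminate G y) H x := by
  rintro a b ⟨hne, hay, hby, hab | ⟨ha, hb⟩⟩
  · exact h a b hab
  · have Ha : tproj E a = x ∨ H.Adj (tproj E a) x := by
      rcases h a y ha with h1 | h1 | ⟨h1, h2⟩
      · exact Or.inl (h1.trans hy)
      · rw [hy] at h1; exact Or.inr h1
      · exact Or.inr h1
    have Hb : tproj E b = x ∨ H.Adj x (tproj E b) := by
      rcases h y b hb with h1 | h1 | ⟨h1, h2⟩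
      · rw [hy] at h1; exact Or.inl h1.symm
      · rw [hy] at h1; exact Or.inr h1
      · rw [hy] at h1; exact absurd h1 (H.irrefl)
    rcases Ha with ha' | ha' <;> rcases Hb with hb' | hb'
    · exact Or.inl (ha'.trans hb'.symm)
    · rw [← ha'] at hb'; exact Or.inr (Or.inl hb')
    · rw [← hb'] at ha'; exact Or.inr (Or.inl ha')
    · exact Or.inr (Or.inr ⟨ha', hb'⟩)

lemma invM_inv {G : SimpleGraph (TwinVar E)} {H : SimpleGraph V} {x : V}
    (hiso : ∀ a b, G.Adj a b → tproj E a ≠ x) (h : InvM E G H x) :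
    Inv E G (eliminate H x) := by
  intro a b hab
  have hax := hiso a b hab
  have hbx := hiso b a hab.symm
  rcases h a b hab with h1 | h1 | ⟨h1, h2⟩
  · exact Or.inl h1
  · exact Or.inr ⟨h1.ne, hax, hbx, Or.inl h1⟩
  · by_cases he : tproj E a = tproj E b
    · exact Or.inl he
    · exact Or.inr ⟨he, hax, hbx, Or.inr ⟨h1, h2⟩⟩

lemma inv_step {G : SimpleGraph (TwinVar E)} {H : SimpleGraph V} (x : V) (h : Inv E G H) :
    Inv E (elimTwinPair E G x) (eliminate H x) := by
  unfold elimTwinPair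
  split_ifs with hr
  · refine invM_inv ?_ (invM_elim (Sum.inl x) rfl (inv_invM h))
    rintro a b ⟨hne, hax, hbx, -⟩ hpa
    cases a with
    | inl y => exact hax (by rw [← hpa]; rfl)
    | inr y => exact y.2 (by rw [show y.1 = x from hpa] at *; exact hr)
  · refine invM_inv ?_
      (invM_elim (Sum.inr ⟨x, hr⟩) rfl (invM_elim (Sum.inl x) rfl (inv_invM h)))
    rintro a b hab hpa
    cases a with
    | inl y =>
      have hy : y = x := hpa
      subst hy
      rcases hab with ⟨hne, hax, hbx, hc | ⟨hc, -⟩⟩ <;> exact hc.2.1 rfl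
    | inr y =>
      exact hab.2.1 (by cases y; cases hpa; rfl)

lemma inv_fold : ∀ (l : List V) (G : SimpleGraph (TwinVar E)) (H : SimpleGraph V),
    Inv E G H → Inv E (l.foldl (elimTwinPair E) G) (elimList H l)
  | [], _, _, h => h
  | x :: l, G, H, h => inv_fold l _ _ (inv_step x h)

lemma twinEdge_tproj {a b : TwinVar E} (h : twinEdge E a b) : E (tproj E a) (tproj E b) := by
  cases a <;> cases b <;> first
    | exact h
    | exact h.2
    | exact h.elim

lemma inv_base : Inv E (moralGraph (twinEdge E)) (moralGraph E) := by
  rintro a b ⟨hne, hedge⟩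
  by_cases he : tproj E a = tproj E b
  · exact Or.inl he
  · refine Or.inr ⟨he, ?_⟩
    rcases hedge with h | h | ⟨c, h1, h2⟩
    · exact Or.inl (twinEdge_tproj h)
    · exact Or.inr (Or.inl (twinEdge_tproj h))
    · exact Or.inr (Or.inr ⟨tproj E c, twinEdge_tproj h1, twinEdge_tproj h2⟩)

lemma mem_twin_target {C : Set V} (b : TwinVar E) (hb : tproj E b ∈ C) :
    b ∈ Sum.inl '' C ∪ twinDup E '' C := by
  cases b with
  | inl y => exact Or.inl ⟨y, hb, rfl⟩
  | inr y =>
    refine Or.inr ⟨y.1, hb, ?_⟩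
    cases y with
    | mk y hy => simp [twinDup, hy]

end TwinAux


/-- the clusters of `X` and `X'` under the twin elimination order are
contained in `C(X) ∪ C(X)'`. -/
theorem twin_cluster_subset {V : Type*} [Fintype V]
    (E : V → V → Prop) (hE : IsAcyclicRel E)
    (π : List V) (hπ : IsElimOrder π) (X : V) :
    twinClusterOf E π (Sum.inl X) ⊆
        Sum.inl '' clusterOf E π X ∪ twinDup E '' clusterOf E π X ∧
    ∀ h : ¬ isRoot E X,
      twinClusterOf E π (Sum.inr ⟨X, h⟩) ⊆
        Sum.inl '' clusterOf E π X ∪ twinDup E '' clusterOf E π X := by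
  classical
  obtain ⟨hnd, hmem⟩ := hπ
  obtain ⟨l1, l2, hsplit⟩ := List.append_of_mem (hmem X)
  have hnd' : (l1 ++ X :: l2).Nodup := hsplit ▸ hnd
  rw [List.nodup_append] at hnd'
  have hXl1 : X ∉ l1 := fun hc => hnd'.2.2 X hc X List.mem_cons_self rfl
  have hidx : π.idxOf X = l1.length := by
    rw [hsplit]; exact indexOf_append_cons l1 X l2 hXl1
  have hbase : clusterOf E π X = closedNbhd (elimList (moralGraph E) l1) X := by
    unfold clusterOf graphAt
    rw [hidx, hsplit, List.take_left]
  set H1 := elimList (moralGraph E) l1 with hH1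
  set Gt := l1.foldl (elimTwinPair E) (moralGraph (twinEdge E)) with hGtdef
  have hinv : Inv E Gt H1 := inv_fold l1 _ _ inv_base
  have hGt : elimList (moralGraph (twinEdge E)) (twinOrder E l1) = Gt :=
    elimList_twinOrder l1 _
  have hXmem : X ∈ clusterOf E π X := by rw [hbase]; exact Set.mem_insert _ _
  have hAdjmem : ∀ y : V, H1.Adj X y → y ∈ clusterOf E π X := by
    intro y hy; rw [hbase]; exact Set.mem_insert_of_mem _ hy
  constructor
  · -- cluster of X
    obtain ⟨r, hblk⟩ : ∃ r, blk E X = Sum.inl X :: r := by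
      unfold blk; split_ifs <;> exact ⟨_, rfl⟩
    have hto : twinOrder E π =
        twinOrder E l1 ++ (Sum.inl X : TwinVar E) :: (r ++ twinOrder E l2) := by
      rw [hsplit, twinOrder_append, twinOrder_cons, hblk]; simp
    have hlaw : @LawfulBEq (TwinVar E)
        (@instBEqOfDecidableEq (TwinVar E) (fun a b => Classical.propDecidable (a = b))) :=
      inferInstance
    intro b hb
    unfold twinClusterOf clusterOf graphAt at hb
    rw [hto, @indexOf_append_cons (TwinVar E)
      (@instBEqOfDecidableEq (TwinVar E) (fun a b => Classical.propDecidable (a = b)))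
      hlaw _ _ _ (inl_not_mem_twinOrder hXl1),
      List.take_left, hGt] at hb
    rcases Set.mem_insert_iff.mp hb with hb | hb
    · subst hb; exact mem_twin_target _ hXmem
    · rcases hinv _ _ hb with h1 | h1
      · exact mem_twin_target _ (by rw [← h1]; exact hXmem)
      · exact mem_twin_target _ (hAdjmem _ h1)
  · -- cluster of X'
    intro h
    have hblk : blk E X = [Sum.inl X, Sum.inr ⟨X, h⟩] := dif_neg h
    have hto : twinOrder E π =
        (twinOrder E l1 ++ [(Sum.inl X : TwinVar E)]) ++
          (Sum.inr ⟨X, h⟩ : TwinVar E) :: twinOrder E l2 := by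
      rw [hsplit, twinOrder_append, twinOrder_cons, hblk]; simp
    have hnm : (Sum.inr ⟨X, h⟩ : TwinVar E) ∉
        twinOrder E l1 ++ [(Sum.inl X : TwinVar E)] := by
      rw [List.mem_append]
      rintro (hc | hc)
      · exact inr_not_mem_twinOrder hXl1 hc
      · simp at hc
    have hM : InvM E (eliminate Gt (Sum.inl X)) H1 X :=
      invM_elim (Sum.inl X) rfl (inv_invM hinv)
    have hlaw : @LawfulBEq (TwinVar E)
        (@instBEqOfDecidableEq (TwinVar E) (fun a b => Classical.propDecidable (a = b))) :=
      inferInstance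
    intro b hb
    unfold twinClusterOf clusterOf graphAt at hb
    rw [hto, @indexOf_append_cons (TwinVar E)
      (@instBEqOfDecidableEq (TwinVar E) (fun a b => Classical.propDecidable (a = b)))
      hlaw _ _ _ hnm,
      List.take_left, elimList_append, hGt] at hb
    rcases Set.mem_insert_iff.mp hb with hb | hb
    · subst hb
      exact mem_twin_target (Sum.inr ⟨X, h⟩) hXmem
    · rcases hM _ _ hb with h1 | h1 | ⟨h1, -⟩
      · refine mem_twin_target _ ?_
        rw [show tproj E b = X from ((show X = tproj E b from h1).symm)]
        exact hXmem
      · exact mem_twin_target _ (hAdjmem _ h1)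
      · exact absurd h1 H1.irrefl

end Counterfactual
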